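/- arXiv:1503.01519 — 3 statements merged into one kernel-verified Lean document; each statement's English description precedes it below -/
import Mathlib

section
/- Let Ω ⊆ ℂ be a hyperbolic domain. Then for every z ∈ Ω one has d_Ω(z) ≥ ε_Ω(z)·(1+|z|²) / (1 + ε_Ω(z)·|z|). -/
open Set Metric
open scoped Classical

/-- The quantity `τ(z,w) = |z-w| / |1 + z·conj w|`, valued in `ℝ≥0∞` so that
antipodal pairs (where the denominator vanishes) get the value `∞`. -/
noncomputable def tauE (z w : ℂ) : ENNReal :=
  ENNReal.ofReal ‖z - w‖ / ENNReal.ofReal ‖1 + z * (starRingEnd ℂ) w‖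

/-- `ε_Ω(z)`: the infimum of `τ(z,a)` over the boundary of `Ω` in the Riemann sphere,
i.e. over the frontier of `Ω` in `ℂ`, together with `∞` (where `τ(z,∞) = 1/|z|`)
when `Ω` is unbounded. -/
noncomputable def epsOm (Ω : Set ℂ) (z : ℂ) : ℝ :=
  ((⨅ a ∈ frontier Ω, tauE z a) ⊓
    (if Bornology.IsBounded Ω then ⊤ else 1 / ENNReal.ofReal ‖z‖)).toReal

/-- A domain in `ℂ` is hyperbolic if it is open, connected,
and its complement contains at least two points. -/
def IsHyperbolicDomain (Ω : Set ℂ) : Prop :=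
  IsOpen Ω ∧ IsConnected Ω ∧ Set.Nontrivial Ωᶜ

/-!
For a nearest boundary point `a` of `z`, the definition of `ε = ε_Ω(z)` gives
`ε |1 + z ā| ≤ |z - a|`, while writing `1 + |z|² = (1 + z ā) + z (z̄ - ā)` gives
`1 + |z|² ≤ |1 + z ā| + |z| |z - a|`. Multiplying the second inequality by `ε` and
inserting the first yields `ε (1 + |z|²) ≤ (1 + ε |z|) |z - a|`.
-/

lemma Complex.norm_one_add_mul_conj_self (z : ℂ) :
    ‖1 + z * (starRingEnd ℂ) z‖ = 1 + ‖z‖ ^ 2 := by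
  rw [Complex.mul_conj', ← Complex.ofReal_pow, ← Complex.ofReal_one, ← Complex.ofReal_add,
    Complex.norm_real, Real.norm_of_nonneg (by positivity)]

lemma Complex.one_add_norm_sq_le (z a : ℂ) :
    1 + ‖z‖ ^ 2 ≤ ‖1 + z * (starRingEnd ℂ) a‖ + ‖z‖ * ‖z - a‖ := by
  have hsplit : 1 + z * (starRingEnd ℂ) z =
      (1 + z * (starRingEnd ℂ) a) + z * (starRingEnd ℂ) (z - a) := by
    rw [map_sub]; ring
  calc 1 + ‖z‖ ^ 2 = ‖1 + z * (starRingEnd ℂ) z‖ := (norm_one_add_mul_conj_self z).symm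
    _ ≤ ‖1 + z * (starRingEnd ℂ) a‖ + ‖z * (starRingEnd ℂ) (z - a)‖ := by
      rw [hsplit]; exact norm_add_le _ _
    _ = ‖1 + z * (starRingEnd ℂ) a‖ + ‖z‖ * ‖z - a‖ := by
      rw [norm_mul, Complex.norm_conj]

lemma epsOm_mul_norm_le {Ω : Set ℂ} {a : ℂ} (ha : a ∈ frontier Ω) (z : ℂ) :
    epsOm Ω z * ‖1 + z * (starRingEnd ℂ) a‖ ≤ ‖z - a‖ := by
  set D := ‖1 + z * (starRingEnd ℂ) a‖
  have hD0 : 0 ≤ D := norm_nonneg _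
  rcases hD0.eq_or_lt with hD | hD
  · rw [← hD, mul_zero]
    exact norm_nonneg _
  have htau : tauE z a = ENNReal.ofReal (‖z - a‖ / D) := by
    rw [tauE, ENNReal.ofReal_div_of_pos hD]
  have hle : epsOm Ω z ≤ ‖z - a‖ / D := by
    rw [← ENNReal.toReal_ofReal (by positivity : 0 ≤ ‖z - a‖ / D), ← htau]
    exact ENNReal.toReal_mono (htau ▸ ENNReal.ofReal_ne_top) (inf_le_left.trans (biInf_le _ ha))
  rwa [← le_div_iff₀ hD]

lemma epsOm_mul_div_le_dist_of_mem_frontier {Ω : Set ℂ} {a : ℂ} (ha : a ∈ frontier Ω) (z : ℂ) :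
    epsOm Ω z * (1 + ‖z‖ ^ 2) / (1 + epsOm Ω z * ‖z‖) ≤ dist z a := by
  set ε := epsOm Ω z
  have hε : 0 ≤ ε := ENNReal.toReal_nonneg
  rw [div_le_iff₀ (by positivity), Complex.dist_eq]
  calc ε * (1 + ‖z‖ ^ 2)
      ≤ ε * ‖1 + z * (starRingEnd ℂ) a‖ + ε * ‖z‖ * ‖z - a‖ :=
        (mul_le_mul_of_nonneg_left (Complex.one_add_norm_sq_le z a) hε).trans_eq (by ring)
    _ ≤ ‖z - a‖ * (1 + ε * ‖z‖) := by
        linear_combination epsOm_mul_norm_le ha z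

theorem dist_ge_eps_lower_bound (Ω : Set ℂ) (hΩ : IsHyperbolicDomain Ω) (z : ℂ) (hz : z ∈ Ω) :
    epsOm Ω z * (1 + ‖z‖ ^ 2) / (1 + epsOm Ω z * ‖z‖) ≤
      Metric.infDist z (frontier Ω) := by
  obtain ⟨b, hb⟩ := hΩ.2.2.nonempty
  have hfrontier : (frontier Ω).Nonempty :=
    nonempty_frontier_iff.mpr ⟨⟨z, hz⟩, fun h => hb (h ▸ mem_univ b)⟩
  obtain ⟨a, ha, hdist⟩ := isClosed_frontier.exists_infDist_eq_dist hfrontier z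
  rw [hdist]
  exact epsOm_mul_div_le_dist_of_mem_frontier ha z
end

section
/- For R > 0 let 𝔻_R = {z ∈ ℂ : |z| < R}. Then inf_{w∈𝔻_R} ε_{𝔻_R}(w) · (1+|w|²) · R/(R²−|w|²) equals 1/2 if R ≤ 1, and equals 2R/(1+R)² (which is < 1/2) if R > 1. -/
open Set Metric
open scoped Classical

/-- `ε` for the disk `{z : |z| < R}`: the infimum of `τ(w,a)` over the circle `|a| = R`. -/
noncomputable def epsDR (R : ℝ) (w : ℂ) : ℝ :=
  (⨅ a ∈ Metric.sphere (0 : ℂ) R, tauE w a).toReal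

/-!
Write `r = |w|`. On the circle `|a| = R` the quotient `τ(w, a)` is smallest at the point `a = R w / |w|`
on the ray through `w`, so `ε(w) = (R - r) / (1 + rR)` and the quantity to minimise is
`g(r) = R (1 + r²) / ((1 + rR)(R + r))` (`diskProfile R r`) over `0 ≤ r < R`. Two factorisations
settle it: `g(r) - 1/2` has the sign of `(R - r)(1 - rR)`, and `g(r) - g(1)` is a positive multiple
of `(1 - r)²`. For `R ≤ 1` the infimum `1/2 = g(R)` is approached as `r → R` but not attained; for
`R > 1` it is the minimum `g(1) = 2R/(1+R)²`.
-/

open ComplexConjugate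

theorem sq_norm_one_add_mul_conj (w a : ℂ) :
    ‖1 + w * conj a‖ ^ 2 = 1 + 2 * (w * conj a).re + ‖w‖ ^ 2 * ‖a‖ ^ 2 := by
  rw [Complex.sq_norm, Complex.normSq_add, Complex.normSq_one, one_mul, Complex.conj_re,
    Complex.normSq_mul, Complex.normSq_conj, ← Complex.sq_norm, ← Complex.sq_norm]
  ring

theorem sub_norm_mul_norm_one_add_mul_conj_le (w a : ℂ) :
    (‖a‖ - ‖w‖) * ‖1 + w * conj a‖ ≤ ‖w - a‖ * (1 + ‖w‖ * ‖a‖) := by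
  have hre : (w * conj a).re ≤ ‖w‖ * ‖a‖ := by
    simpa [norm_mul] using Complex.re_le_norm (w * conj a)
  have hsub : ‖w - a‖ ^ 2 = ‖w‖ ^ 2 + ‖a‖ ^ 2 - 2 * (w * conj a).re := by
    rw [Complex.sq_norm, Complex.normSq_sub, ← Complex.sq_norm, ← Complex.sq_norm]
  refine abs_le_of_sq_le_sq' ?_ (by positivity) |>.2
  rw [mul_pow, mul_pow, sq_norm_one_add_mul_conj, hsub]
  -- the difference is `2 (|w||a| - Re(w ā)) ((|a| - |w|)² + (1 + |w||a|)²)`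
  nlinarith [mul_nonneg (sub_nonneg.2 hre)
    (by positivity : (0 : ℝ) ≤ (‖a‖ - ‖w‖) ^ 2 + (1 + ‖w‖ * ‖a‖) ^ 2)]

theorem ofReal_div_le_tauE (w a : ℂ) :
    ENNReal.ofReal ((‖a‖ - ‖w‖) / (1 + ‖w‖ * ‖a‖)) ≤ tauE w a := by
  rcases (norm_nonneg (1 + w * conj a)).eq_or_lt with hzero | hpos
  · have hwa : w ≠ a := by
      rintro rfl
      rw [Complex.mul_conj, ← Complex.ofReal_one, ← Complex.ofReal_add, Complex.norm_real,
        Real.norm_eq_abs, eq_comm, abs_eq_zero] at hzero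
      linarith [Complex.normSq_nonneg w]
    rw [tauE, ← hzero, ENNReal.ofReal_zero, ENNReal.div_zero (by simpa [sub_eq_zero] using hwa)]
    exact le_top
  · rw [tauE, ← ENNReal.ofReal_div_of_pos hpos]
    refine ENNReal.ofReal_le_ofReal ((div_le_div_iff₀ (by positivity) hpos).2 ?_)
    exact sub_norm_mul_norm_one_add_mul_conj_le w a

theorem tauE_mul_exp_arg {R : ℝ} {w : ℂ} (hw : ‖w‖ ≤ R) :
    tauE w (R * Complex.exp (w.arg * Complex.I))
      = ENNReal.ofReal ((R - ‖w‖) / (1 + ‖w‖ * R)) := by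
  have hR : 0 ≤ R := (norm_nonneg w).trans hw
  set u := Complex.exp (w.arg * Complex.I)
  have hu : u * conj u = 1 := by
    rw [Complex.mul_conj, ← Complex.sq_norm, Complex.norm_exp_ofReal_mul_I, one_pow,
      Complex.ofReal_one]
  have hw_eq : w = ‖w‖ * u := (Complex.norm_mul_exp_arg_mul_I w).symm
  have hnum : w - R * u = ((‖w‖ - R : ℝ) : ℂ) * u := by
    nth_rw 1 [hw_eq]; push_cast; ring
  have hden : 1 + w * conj (R * u) = ((1 + ‖w‖ * R : ℝ) : ℂ) := by
    nth_rw 1 [hw_eq]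
    rw [map_mul, Complex.conj_ofReal]
    push_cast
    linear_combination (‖w‖ * R : ℂ) * hu
  rw [tauE, hnum, hden, norm_mul, Complex.norm_exp_ofReal_mul_I, mul_one, Complex.norm_real,
    Complex.norm_real, Real.norm_of_nonpos (by linarith), neg_sub,
    Real.norm_of_nonneg (by positivity), ENNReal.ofReal_div_of_pos (by positivity)]

theorem epsDR_eq {R : ℝ} {w : ℂ} (hw : ‖w‖ ≤ R) :
    epsDR R w = (R - ‖w‖) / (1 + ‖w‖ * R) := by
  have hR : 0 ≤ R := (norm_nonneg w).trans hw
  have hinf : ⨅ a ∈ sphere (0 : ℂ) R, tauE w a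
      = ENNReal.ofReal ((R - ‖w‖) / (1 + ‖w‖ * R)) := by
    refine le_antisymm (iInf₂_le_of_le _ ?_ (tauE_mul_exp_arg hw).le) (le_iInf₂ fun a ha => ?_)
    · simp [abs_of_nonneg hR, Complex.norm_exp_ofReal_mul_I]
    · simpa [mem_sphere_zero_iff_norm.1 ha] using ofReal_div_le_tauE w a
  rw [epsDR, hinf, ENNReal.toReal_ofReal (div_nonneg (by linarith) (by positivity))]

theorem image_norm_ball_zero (R : ℝ) : (‖·‖) '' ball (0 : ℂ) R = Ico 0 R := by
  ext r
  constructor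
  · rintro ⟨w, hw, rfl⟩
    exact ⟨norm_nonneg w, mem_ball_zero_iff.1 hw⟩
  · rintro ⟨hr0, hrR⟩
    exact ⟨r, by simpa [abs_of_nonneg hr0] using hrR, by simp [abs_of_nonneg hr0]⟩

section Profile

noncomputable def diskProfile (R r : ℝ) : ℝ :=
  R * (1 + r ^ 2) / ((1 + r * R) * (R + r))

variable {R r : ℝ}

theorem epsDR_mul_density {w : ℂ} (hw : ‖w‖ < R) :
    epsDR R w * ((1 + ‖w‖ ^ 2) * (R / (R ^ 2 - ‖w‖ ^ 2))) = diskProfile R ‖w‖ := by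
  have hR : 0 < R := (norm_nonneg w).trans_lt hw
  have hdiff : R ^ 2 - ‖w‖ ^ 2 ≠ 0 := by nlinarith [norm_nonneg w]
  rw [epsDR_eq hw.le, diskProfile]
  field_simp
  ring

theorem diskProfile_self (hR : 0 < R) : diskProfile R R = 1 / 2 := by
  have : 0 < 1 + R ^ 2 := by positivity
  rw [diskProfile]
  field_simp
  ring

theorem diskProfile_one (hR : 0 < R) : diskProfile R 1 = 2 * R / (1 + R) ^ 2 := by
  have : 0 < 1 + R := by positivity
  rw [diskProfile]
  field_simp
  ring

theorem diskProfile_sub_half (hR : 0 < R) (hr : 0 ≤ r) :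
    diskProfile R r - 1 / 2 = (R - r) * (1 - r * R) / (2 * ((1 + r * R) * (R + r))) := by
  have : 0 < R + r := by positivity
  rw [diskProfile]
  field_simp
  ring

theorem diskProfile_sub_diskProfile_one (hR : 0 < R) (hr : 0 ≤ r) :
    diskProfile R r - diskProfile R 1
      = R * (1 + R ^ 2) * (1 - r) ^ 2 / ((1 + R) ^ 2 * ((1 + r * R) * (R + r))) := by
  have : 0 < R + r := by positivity
  rw [diskProfile_one hR, diskProfile]
  field_simp
  ring

theorem half_le_diskProfile (hR : 0 < R) (hR1 : R ≤ 1) (hr : r ∈ Icc 0 R) :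
    1 / 2 ≤ diskProfile R r := by
  obtain ⟨hr0, hrR⟩ := hr
  have hrR1 : 0 ≤ 1 - r * R := by nlinarith
  have := diskProfile_sub_half hR hr0
  have : 0 ≤ (R - r) * (1 - r * R) / (2 * ((1 + r * R) * (R + r))) :=
    div_nonneg (mul_nonneg (sub_nonneg.2 hrR) hrR1) (by positivity)
  linarith

theorem diskProfile_one_le (hR : 0 < R) (hr : 0 ≤ r) : diskProfile R 1 ≤ diskProfile R r := by
  have := diskProfile_sub_diskProfile_one hR hr
  have : 0 ≤ R * (1 + R ^ 2) * (1 - r) ^ 2 / ((1 + R) ^ 2 * ((1 + r * R) * (R + r))) := by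
    positivity
  linarith

theorem continuousAt_diskProfile (hR : 0 < R) (hr : 0 ≤ r) : ContinuousAt (diskProfile R) r := by
  have : (1 + r * R) * (R + r) ≠ 0 := by positivity
  unfold diskProfile
  fun_prop (disch := assumption)

theorem isGLB_diskProfile_Ico (hR : 0 < R) (hR1 : R ≤ 1) :
    IsGLB (diskProfile R '' Ico 0 R) (1 / 2) := by
  refine isGLB_of_mem_closure ?_ ?_
  · rintro _ ⟨r, hr, rfl⟩
    exact half_le_diskProfile hR hR1 (Ico_subset_Icc_self hr)
  · rw [← diskProfile_self hR]
    refine (continuousAt_diskProfile hR hR.le).continuousWithinAt.mem_closure_image ?_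
    rw [closure_Ico hR.ne]
    exact right_mem_Icc.2 hR.le

theorem isLeast_diskProfile_Ico (hR1 : 1 < R) :
    IsLeast (diskProfile R '' Ico 0 R) (2 * R / (1 + R) ^ 2) := by
  have hR : 0 < R := one_pos.trans hR1
  rw [← diskProfile_one hR]
  refine ⟨mem_image_of_mem _ ⟨zero_le_one, hR1⟩, ?_⟩
  rintro _ ⟨r, hr, rfl⟩
  exact diskProfile_one_le hR hr.1

theorem two_mul_div_one_add_sq_lt_half (hR : 0 ≤ R) (hR1 : R ≠ 1) :
    2 * R / (1 + R) ^ 2 < 1 / 2 := by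
  have : 0 < (R - 1) ^ 2 := by positivity [sub_ne_zero.2 hR1]
  rw [div_lt_iff₀ (by positivity)]
  nlinarith

end Profile

theorem hatC_disk (R : ℝ) (hR : 0 < R) :
    (sInf ((fun w => epsDR R w * ((1 + ‖w‖ ^ 2) * (R / (R ^ 2 - ‖w‖ ^ 2)))) ''
        ball (0 : ℂ) R) = if R ≤ 1 then 1 / 2 else 2 * R / (1 + R) ^ 2) ∧
      (1 < R → 2 * R / (1 + R) ^ 2 < 1 / 2) := by
  have himage : (fun w => epsDR R w * ((1 + ‖w‖ ^ 2) * (R / (R ^ 2 - ‖w‖ ^ 2)))) '' ball 0 R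
      = diskProfile R '' Ico 0 R := by
    rw [← image_norm_ball_zero, image_image]
    exact image_congr fun w hw => epsDR_mul_density (mem_ball_zero_iff.1 hw)
  refine ⟨?_, fun hR1 => two_mul_div_one_add_sq_lt_half hR.le hR1.ne'⟩
  rw [himage]
  split_ifs with hR1
  · exact (isGLB_diskProfile_Ico hR hR1).csInf_eq ((nonempty_Ico.2 hR).image _)
  · exact (isLeast_diskProfile_Ico (not_le.1 hR1)).csInf_eq
end

section
/- For 0 < R and w ∈ ℂ with |w| < R, one has ε_{𝔻_R}(w) = (R−|w|)/(1+R|w|) and δ_{𝔻_R}(w) = (R−|w|)/√((1+R²)(1+|w|²)); that is, the infima of τ(w,a) and σ(w,a) over the circle |a| = R are attained and equal σ and τ evaluated at the radially nearest boundary point. -/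
open Set Metric
open scoped Classical

/-- The chordal (spherical) distance `σ(z,w) = |z-w| / √((1+|z|²)(1+|w|²))`. -/
noncomputable def sph (z w : ℂ) : ℝ :=
  ‖z - w‖ / Real.sqrt ((1 + ‖z‖ ^ 2) * (1 + ‖w‖ ^ 2))

/-- `δ` for the disk `{z : |z| < R}`: the infimum of `σ(w,a)` over the circle `|a| = R`. -/
noncomputable def deltaDR (R : ℝ) (w : ℂ) : ℝ :=
  sInf ((fun a => sph w a) '' Metric.sphere (0 : ℂ) R)

/-!
On the circle `|a| = R` the triangle inequality gives `|w - a| ≥ R - |w|` and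
`|1 + w·conj a| ≤ 1 + R|w|`, and both are equalities at the radial projection `a = R·w/|w|`
of `w`. Hence that point minimises `τ(w, ·)`, and also `σ(w, ·)`, whose denominator only
depends on `|a| = R`.
-/

section DiskBoundary

variable {R : ℝ} {w a : ℂ}

lemma sub_norm_le_norm_sub_of_mem_sphere (ha : a ∈ sphere (0 : ℂ) R) : R - ‖w‖ ≤ ‖w - a‖ := by
  rw [mem_sphere_zero_iff_norm] at ha
  simpa [ha, norm_sub_rev] using norm_sub_norm_le a w

lemma norm_one_add_mul_conj_le_of_mem_sphere (ha : a ∈ sphere (0 : ℂ) R) :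
    ‖1 + w * (starRingEnd ℂ) a‖ ≤ 1 + R * ‖w‖ := by
  rw [mem_sphere_zero_iff_norm] at ha
  calc ‖1 + w * (starRingEnd ℂ) a‖ ≤ ‖(1 : ℂ)‖ + ‖w * (starRingEnd ℂ) a‖ := norm_add_le _ _
    _ = 1 + R * ‖w‖ := by simp [ha, mul_comm]

lemma exists_mem_sphere_norm_sub_eq_and_norm_one_add_mul_conj_eq (hw : ‖w‖ ≤ R) :
    ∃ a ∈ sphere (0 : ℂ) R,
      ‖w - a‖ = R - ‖w‖ ∧ ‖1 + w * (starRingEnd ℂ) a‖ = 1 + R * ‖w‖ := by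
  set u := Complex.exp (w.arg * Complex.I)
  have hu : ‖u‖ = 1 := Complex.norm_exp_ofReal_mul_I _
  have hwu : w = ‖w‖ * u := (Complex.norm_mul_exp_arg_mul_I w).symm
  have hR : 0 ≤ R := (norm_nonneg w).trans hw
  refine ⟨R * u, by simp [hu, abs_of_nonneg hR], ?_, ?_⟩
  · have hsub : w - R * u = ((‖w‖ - R : ℝ) : ℂ) * u := by
      nth_rw 1 [hwu]; push_cast; ring
    rw [hsub, norm_mul, hu, Complex.norm_real, Real.norm_of_nonpos (by linarith)]
    ring
  · have hprod : w * (starRingEnd ℂ) (R * u) = ((R * ‖w‖ : ℝ) : ℂ) := by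
      nth_rw 1 [hwu]
      rw [map_mul, Complex.conj_ofReal]
      calc (‖w‖ * u * (R * (starRingEnd ℂ) u) : ℂ) = ‖w‖ * R * (u * (starRingEnd ℂ) u) := by
            ring
        _ = ((R * ‖w‖ : ℝ) : ℂ) := by rw [Complex.mul_conj', hu]; push_cast; ring
    rw [hprod, ← Complex.ofReal_one, ← Complex.ofReal_add, Complex.norm_real,
      Real.norm_of_nonneg (by positivity)]

lemma isLeast_tauE_image_sphere (hw : ‖w‖ ≤ R) :
    IsLeast (tauE w '' sphere (0 : ℂ) R)
      (ENNReal.ofReal ((R - ‖w‖) / (1 + R * ‖w‖))) := by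
  have hden : 0 < 1 + R * ‖w‖ := by
    have := (norm_nonneg w).trans hw
    positivity
  obtain ⟨a₀, ha₀, hsub, hprod⟩ := exists_mem_sphere_norm_sub_eq_and_norm_one_add_mul_conj_eq hw
  rw [ENNReal.ofReal_div_of_pos hden]
  refine ⟨⟨a₀, ha₀, by rw [tauE, hsub, hprod]⟩, forall_mem_image.2 fun a ha => ?_⟩
  exact ENNReal.div_le_div (ENNReal.ofReal_le_ofReal (sub_norm_le_norm_sub_of_mem_sphere ha))
    (ENNReal.ofReal_le_ofReal (norm_one_add_mul_conj_le_of_mem_sphere ha))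

lemma sph_eq_of_mem_sphere (ha : a ∈ sphere (0 : ℂ) R) :
    sph w a = ‖w - a‖ / Real.sqrt ((1 + R ^ 2) * (1 + ‖w‖ ^ 2)) := by
  rw [sph, mem_sphere_zero_iff_norm.1 ha, mul_comm (1 + ‖w‖ ^ 2)]

lemma isLeast_sph_image_sphere (hw : ‖w‖ ≤ R) :
    IsLeast (sph w '' sphere (0 : ℂ) R)
      ((R - ‖w‖) / Real.sqrt ((1 + R ^ 2) * (1 + ‖w‖ ^ 2))) := by
  obtain ⟨a₀, ha₀, hsub, -⟩ := exists_mem_sphere_norm_sub_eq_and_norm_one_add_mul_conj_eq hw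
  refine ⟨⟨a₀, ha₀, by rw [sph_eq_of_mem_sphere ha₀, hsub]⟩, forall_mem_image.2 fun a ha => ?_⟩
  rw [sph_eq_of_mem_sphere ha]
  gcongr
  exact sub_norm_le_norm_sub_of_mem_sphere ha

end DiskBoundary

theorem eps_delta_disk_formulas_general (R : ℝ) (w : ℂ) (hw : ‖w‖ < R) :
    epsDR R w = (R - ‖w‖) / (1 + R * ‖w‖) ∧
      deltaDR R w =
        (R - ‖w‖) / Real.sqrt ((1 + R ^ 2) * (1 + ‖w‖ ^ 2)) := by
  have hR : 0 ≤ R := (norm_nonneg w).trans hw.le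
  have hnonneg : 0 ≤ (R - ‖w‖) / (1 + R * ‖w‖) := div_nonneg (by linarith) (by positivity)
  constructor
  · rw [epsDR, ← sInf_image, (isLeast_tauE_image_sphere hw.le).csInf_eq,
      ENNReal.toReal_ofReal hnonneg]
  · exact (isLeast_sph_image_sphere hw.le).csInf_eq

theorem eps_delta_disk_formulas (R : ℝ) (hR : 0 < R) (w : ℂ) (hw : ‖w‖ < R) :
    epsDR R w = (R - ‖w‖) / (1 + R * ‖w‖) ∧
      deltaDR R w =
        (R - ‖w‖) / Real.sqrt ((1 + R ^ 2) * (1 + ‖w‖ ^ 2)) :=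
  eps_delta_disk_formulas_general R w hw
end
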